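/- Fix real constants E, K, n', σ'_f, ε'_f > 0 and b, c < 0, and let RO, SD, CMB be as defined below. There exists a unique function φ : (0, ∞) → (0, ∞) satisfying CMB(φ(σ)) = RO(SD(σ)) for all σ > 0 (well-defined since CMB is a bijection of (0,∞) onto itself), and this function satisfies: (i) φ is a strictly monotonically decreasing bijection of (0, ∞) onto (0, ∞); (ii) φ(σ) → ∞ as σ → 0⁺; (iii) φ is infinitely differentiable on (0, ∞). -/

import Mathlib

open Filter Set Topology

/-- 1D smooth local inverse. -/
lemma my_exists_smooth_localInverse {f : ℝ → ℝ} {a f' : ℝ} (hf : ContDiffAt ℝ (⊤ : ℕ∞) f a)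
    (hd : HasDerivAt f f' a) (h0 : f' ≠ 0) :
    ∃ g : ℝ → ℝ, ContDiffAt ℝ (⊤ : ℕ∞) g (f a) ∧ g (f a) = a ∧ ∀ᶠ y in 𝓝 (f a), f (g y) = y := by
  have hfd := hd.hasFDerivAt_equiv h0
  exact ⟨hf.localInverse hfd (by simp), hf.to_localInverse hfd (by simp),
    hf.localInverse_apply_image hfd (by simp),
    (hf.hasStrictFDerivAt' hfd (by simp)).eventually_right_inverse⟩


section
variable {E K n' σf εf b c : ℝ}

lemma RO_mono (hE : 0 < E) (hK : 0 < K) (hn : 0 < n') :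
    StrictMonoOn (fun x : ℝ => x / E + (x / K) ^ (1 / n')) (Ioi 0) := by
  intro x hx y _ hxy
  have hx : (0:ℝ) < x := hx
  have h1 : (x/K) ^ (1/n') < (y/K) ^ (1/n') :=
    Real.rpow_lt_rpow (by positivity) (by gcongr) (by positivity)
  have h2 : x/E < y/E := by gcongr
  dsimp only
  linarith

lemma gf_mono (hE : 0 < E) (hK : 0 < K) (hn : 0 < n') :
    StrictMonoOn (fun x : ℝ => x ^ 2 / E + x * (x / K) ^ (1 / n')) (Ioi 0) := by
  intro x hx y hy hxy
  have hx : (0:ℝ) < x := hx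
  have hy : (0:ℝ) < y := hy
  have h1 : (x/K) ^ (1/n') < (y/K) ^ (1/n') :=
    Real.rpow_lt_rpow (by positivity) (by gcongr) (by positivity)
  have h0 : (0:ℝ) < (x/K) ^ (1/n') := by positivity
  have h2 : x * (x/K) ^ (1/n') < y * (y/K) ^ (1/n') := by
    calc x * (x/K) ^ (1/n') < y * (x/K) ^ (1/n') := by gcongr
    _ < y * (y/K) ^ (1/n') := by gcongr
  have h3 : x^2/E < y^2/E := by gcongr
  dsimp only
  linarith

lemma CMB_anti (hE : 0 < E) (hσf : 0 < σf) (hεf : 0 < εf) (hb : b < 0) (hc : c < 0) :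
    StrictAntiOn (fun N : ℝ => σf / E * (2 * N) ^ b + εf * (2 * N) ^ c) (Ioi 0) := by
  intro x hx y hy hxy
  have hx : (0:ℝ) < x := hx
  have h1 : (2*y) ^ b < (2*x) ^ b := Real.rpow_lt_rpow_of_neg (by positivity) (by linarith) hb
  have h2 : (2*y) ^ c < (2*x) ^ c := Real.rpow_lt_rpow_of_neg (by positivity) (by linarith) hc
  have h3 : σf/E * (2*y)^b < σf/E * (2*x)^b := by gcongr
  have h4 : εf * (2*y)^c < εf * (2*x)^c := by gcongr
  dsimp only
  linarith

lemma RO_contDiffAt (hK : 0 < K) {x : ℝ} (hx : 0 < x) :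
    ContDiffAt ℝ (⊤ : ℕ∞) (fun x : ℝ => x / E + (x / K) ^ (1 / n')) x :=
  (contDiffAt_id.div_const E).add
    ((contDiffAt_id.div_const K).rpow_const_of_ne (by positivity))

lemma gf_contDiffAt (hK : 0 < K) {x : ℝ} (hx : 0 < x) :
    ContDiffAt ℝ (⊤ : ℕ∞) (fun x : ℝ => x ^ 2 / E + x * (x / K) ^ (1 / n')) x :=
  ((contDiffAt_id.pow 2).div_const E).add
    (contDiffAt_id.mul ((contDiffAt_id.div_const K).rpow_const_of_ne (by positivity)))

lemma gf_hasDerivAt (hE : 0 < E) (hK : 0 < K) (hn : 0 < n') {x : ℝ} (hx : 0 < x) :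
    ∃ d : ℝ, 0 < d ∧ HasDerivAt (fun x : ℝ => x ^ 2 / E + x * (x / K) ^ (1 / n')) d x := by
  have h1 : HasDerivAt (fun x : ℝ => x / K) (1 / K) x := by
    simpa using (hasDerivAt_id x).div_const K
  have h2 := h1.rpow_const (p := 1/n') (Or.inl (by positivity))
  have h3 := (hasDerivAt_id x).mul h2
  have h4 := ((hasDerivAt_pow 2 x).div_const E).add h3
  refine ⟨_, ?_, h4⟩
  simp only [id_eq, one_mul]
  push_cast
  positivity

lemma CMB_hasDerivAt (hE : 0 < E) (hσf : 0 < σf) (hεf : 0 < εf) (hb : b < 0) (hc : c < 0)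
    {N : ℝ} (hN : 0 < N) :
    ∃ d : ℝ, d < 0 ∧ HasDerivAt (fun N : ℝ => σf / E * (2 * N) ^ b + εf * (2 * N) ^ c) d N := by
  have h1 : HasDerivAt (fun N : ℝ => 2 * N) 2 N := by
    simpa using (hasDerivAt_id N).const_mul 2
  have h2 := (h1.rpow_const (p := b) (Or.inl (by positivity))).const_mul (σf / E)
  have h3 := (h1.rpow_const (p := c) (Or.inl (by positivity))).const_mul εf
  refine ⟨_, ?_, h2.add h3⟩
  have hp1 : (0:ℝ) < (2*N) ^ (b-1) := by positivity
  have hp2 : (0:ℝ) < (2*N) ^ (c-1) := by positivity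
  have e1 : σf / E * (2 * b * (2*N) ^ (b-1)) < 0 := by
    apply mul_neg_of_pos_of_neg (by positivity); nlinarith
  have e2 : εf * (2 * c * (2*N) ^ (c-1)) < 0 := by
    apply mul_neg_of_pos_of_neg (by positivity); nlinarith
  linarith

lemma CMB_contDiffAt (hE : 0 < E) {N : ℝ} (hN : 0 < N) :
    ContDiffAt ℝ (⊤ : ℕ∞) (fun N : ℝ => σf / E * (2 * N) ^ b + εf * (2 * N) ^ c) N := by
  have h1 : ContDiffAt ℝ (⊤ : ℕ∞) (fun N : ℝ => 2 * N) N := contDiffAt_const.mul contDiffAt_id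
  exact (contDiffAt_const.mul (h1.rpow_const_of_ne (by positivity))).add
    (contDiffAt_const.mul (h1.rpow_const_of_ne (by positivity)))

end


section
variable {E K n' σf εf b c : ℝ}

lemma RO_surj (hE : 0 < E) (hK : 0 < K) (hn : 0 < n') :
    SurjOn (fun x : ℝ => x / E + (x / K) ^ (1 / n')) (Ioi 0) (Ioi 0) := by
  intro y hy
  have hy : (0:ℝ) < y := hy
  set t := min (E * (y/2)) (K * (y/2) ^ n') with ht_def
  have ht : 0 < t := lt_min (by positivity) (by positivity)
  set M := E * y with hM_def
  have hM : 0 < M := by positivity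
  have htM : t ≤ M := le_trans (min_le_left _ _) (by nlinarith)
  have cont : ContinuousOn (fun x : ℝ => x / E + (x / K) ^ (1 / n')) (Icc t M) := by
    apply ContinuousOn.add (continuousOn_id.div_const E)
    exact (continuousOn_id.div_const K).rpow_const fun x hx =>
      Or.inl (by have hx0 : 0 < x := lt_of_lt_of_le ht hx.1; positivity)
  have fl : t / E + (t / K) ^ (1 / n') ≤ y := by
    have c1 : t / E ≤ y / 2 := by
      rw [div_le_iff₀ hE]
      have := min_le_left (E * (y/2)) (K * (y/2) ^ n')
      nlinarith
    have c2 : (t / K) ^ (1 / n') ≤ y / 2 := by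
      have h : t / K ≤ (y/2) ^ n' := by
        rw [div_le_iff₀ hK]
        have := min_le_right (E * (y/2)) (K * (y/2) ^ n')
        nlinarith
      calc (t / K) ^ (1 / n') ≤ ((y/2) ^ n') ^ (1 / n') :=
            Real.rpow_le_rpow (by positivity) h (by positivity)
        _ = y / 2 := by
            rw [← Real.rpow_mul (by positivity), mul_one_div_cancel hn.ne', Real.rpow_one]
    linarith
  have fu : y ≤ M / E + (M / K) ^ (1 / n') := by
    have : M / E = y := by rw [hM_def, mul_comm, mul_div_assoc, div_self hE.ne', mul_one]
    have h2 : (0:ℝ) ≤ (M / K) ^ (1 / n') := by positivity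
    linarith
  obtain ⟨x, hx, hfx⟩ := intermediate_value_Icc htM cont ⟨fl, fu⟩
  exact ⟨x, lt_of_lt_of_le ht hx.1, hfx⟩

lemma CMB_surj (hE : 0 < E) (hσf : 0 < σf) (hεf : 0 < εf) (hb : b < 0) (hc : c < 0) :
    SurjOn (fun N : ℝ => σf / E * (2 * N) ^ b + εf * (2 * N) ^ c) (Ioi 0) (Ioi 0) := by
  intro y hy
  have hy : (0:ℝ) < y := hy
  set N₁ := (y * E / σf) ^ b⁻¹ / 2 with hN₁_def
  set N₂ := max ((y * E / (2 * σf)) ^ b⁻¹) ((y / (2 * εf)) ^ c⁻¹) / 2 with hN₂_def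
  have hA : (0:ℝ) < (y * E / σf) ^ b⁻¹ := by positivity
  have hB1 : (0:ℝ) < (y * E / (2 * σf)) ^ b⁻¹ := by positivity
  have hB2 : (0:ℝ) < (y / (2 * εf)) ^ c⁻¹ := by positivity
  have hN₁ : 0 < N₁ := by positivity
  have hN₂ : 0 < N₂ := by positivity
  have h2N₁ : 2 * N₁ = (y * E / σf) ^ b⁻¹ := by rw [hN₁_def]; ring
  have h2N₂ : 2 * N₂ = max ((y * E / (2 * σf)) ^ b⁻¹) ((y / (2 * εf)) ^ c⁻¹) := by
    rw [hN₂_def]; ring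
  have key : ∀ t : ℝ, 0 < t → ∀ e : ℝ, e ≠ 0 → (t ^ e⁻¹) ^ e = t := fun t ht e he => by
    rw [← Real.rpow_mul ht.le, inv_mul_cancel₀ he, Real.rpow_one]
  have hle1 : y ≤ σf / E * (2 * N₁) ^ b + εf * (2 * N₁) ^ c := by
    rw [h2N₁, key _ (by positivity) _ hb.ne]
    have h1 : σf / E * (y * E / σf) = y := by field_simp
    have h2 : (0:ℝ) ≤ εf * ((y * E / σf) ^ b⁻¹) ^ c := by positivity
    linarith
  have hle2 : σf / E * (2 * N₂) ^ b + εf * (2 * N₂) ^ c ≤ y := by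
    rw [h2N₂]
    have e1 : (max ((y * E / (2 * σf)) ^ b⁻¹) ((y / (2 * εf)) ^ c⁻¹)) ^ b
        ≤ ((y * E / (2 * σf)) ^ b⁻¹) ^ b :=
      Real.rpow_le_rpow_of_nonpos hB1 (le_max_left _ _) hb.le
    have e2 : (max ((y * E / (2 * σf)) ^ b⁻¹) ((y / (2 * εf)) ^ c⁻¹)) ^ c
        ≤ ((y / (2 * εf)) ^ c⁻¹) ^ c :=
      Real.rpow_le_rpow_of_nonpos hB2 (le_max_right _ _) hc.le
    rw [key _ (by positivity) _ hb.ne] at e1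
    rw [key _ (by positivity) _ hc.ne] at e2
    have f1 : σf / E * (max ((y * E / (2 * σf)) ^ b⁻¹) ((y / (2 * εf)) ^ c⁻¹)) ^ b
        ≤ σf / E * (y * E / (2 * σf)) := by gcongr
    have f2 : εf * (max ((y * E / (2 * σf)) ^ b⁻¹) ((y / (2 * εf)) ^ c⁻¹)) ^ c
        ≤ εf * (y / (2 * εf)) := by gcongr
    have g1 : σf / E * (y * E / (2 * σf)) = y / 2 := by field_simp
    have g2 : εf * (y / (2 * εf)) = y / 2 := by field_simp
    linarith
  have hsub : uIcc N₁ N₂ ⊆ Ioi 0 := by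
    intro x hx
    rcases Set.mem_uIcc.1 hx with ⟨h, _⟩ | ⟨h, _⟩ <;> exact lt_of_lt_of_le (by assumption) h
  have cont : ContinuousOn (fun N : ℝ => σf / E * (2 * N) ^ b + εf * (2 * N) ^ c)
      (uIcc N₁ N₂) := by
    have c2 : ContinuousOn (fun N : ℝ => 2 * N) (uIcc N₁ N₂) :=
      (continuous_const.mul continuous_id).continuousOn
    exact ((c2.rpow_const fun x hx => Or.inl (ne_of_gt (by have hx0 : (0:ℝ) < x := hsub hx; positivity))).const_smul
        (σf / E)).add ((c2.rpow_const fun x hx =>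
        Or.inl (ne_of_gt (by have hx0 : (0:ℝ) < x := hsub hx; positivity))).const_smul εf)
  have hmem : y ∈ uIcc (σf / E * (2 * N₁) ^ b + εf * (2 * N₁) ^ c)
      (σf / E * (2 * N₂) ^ b + εf * (2 * N₂) ^ c) := Set.mem_uIcc.2 (Or.inr ⟨hle2, hle1⟩)
  obtain ⟨x, hx, hfx⟩ := intermediate_value_uIcc cont hmem
  exact ⟨x, hsub hx, hfx⟩

end


theorem stmt5 (E K n' σf εf b c : ℝ) (hE : 0 < E) (hK : 0 < K) (hn : 0 < n')
    (hσf : 0 < σf) (hεf : 0 < εf) (hb : b < 0) (hc : c < 0)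
    (RO CMB SD : ℝ → ℝ)
    (hRO : ∀ σ : ℝ, RO σ = σ / E + (σ / K) ^ (1 / n'))
    (hCMB : ∀ N : ℝ, CMB N = σf / E * (2 * N) ^ b + εf * (2 * N) ^ c)
    (hSD : ∀ s : ℝ, 0 < s →
      0 < SD s ∧ (SD s) ^ 2 / E + SD s * (SD s / K) ^ (1 / n') = s ^ 2 / E) :
    (∃ φ : ℝ → ℝ, ∀ σ : ℝ, 0 < σ → 0 < φ σ ∧ CMB (φ σ) = RO (SD σ)) ∧
    (∀ φ₁ φ₂ : ℝ → ℝ,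
      (∀ σ : ℝ, 0 < σ → 0 < φ₁ σ ∧ CMB (φ₁ σ) = RO (SD σ)) →
      (∀ σ : ℝ, 0 < σ → 0 < φ₂ σ ∧ CMB (φ₂ σ) = RO (SD σ)) →
      ∀ σ : ℝ, 0 < σ → φ₁ σ = φ₂ σ) ∧
    (∀ φ : ℝ → ℝ, (∀ σ : ℝ, 0 < σ → 0 < φ σ ∧ CMB (φ σ) = RO (SD σ)) →
      StrictAntiOn φ (Set.Ioi 0) ∧
      Set.BijOn φ (Set.Ioi 0) (Set.Ioi 0) ∧
      Tendsto φ (nhdsWithin 0 (Set.Ioi 0)) atTop ∧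
      ContDiffOn ℝ (⊤ : ℕ∞) φ (Set.Ioi 0)) := by
  have hRO' : RO = fun σ : ℝ => σ / E + (σ / K) ^ (1 / n') := funext hRO
  subst hRO'
  have hCMB' : CMB = fun N : ℝ => σf / E * (2 * N) ^ b + εf * (2 * N) ^ c := funext hCMB
  subst hCMB'
  have gmono := gf_mono hE hK hn
  have ginj := gmono.injOn
  have ROmono := RO_mono hE hK hn
  have CMBanti := CMB_anti hE hσf hεf hb hc
  have CMBinj := CMBanti.injOn
  -- SD is strictly monotone on positives
  have SDlt : ∀ s t : ℝ, 0 < s → 0 < t → s < t → SD s < SD t := by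
    intro s t hs ht hst
    by_contra h
    push_neg at h
    have h1 := gmono.monotoneOn (mem_Ioi.2 (hSD t ht).1) (mem_Ioi.2 (hSD s hs).1) h
    rw [(hSD s hs).2, (hSD t ht).2] at h1
    nlinarith [mul_le_mul_of_nonneg_right h1 hE.le, div_mul_cancel₀ (t ^ 2) hE.ne',
      div_mul_cancel₀ (s ^ 2) hE.ne', mul_pos (sub_pos.2 hst) (show (0:ℝ) < t + s by linarith)]
  -- SD is surjective onto positives
  have SDsurj : ∀ x : ℝ, 0 < x → ∃ s : ℝ, 0 < s ∧ SD s = x := by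
    intro x hx
    have hgx : 0 < x ^ 2 / E + x * (x / K) ^ (1 / n') := by positivity
    refine ⟨Real.sqrt (E * (x ^ 2 / E + x * (x / K) ^ (1 / n'))), Real.sqrt_pos.2 (by positivity), ?_⟩
    set s := Real.sqrt (E * (x ^ 2 / E + x * (x / K) ^ (1 / n'))) with hs_def
    have hs : 0 < s := Real.sqrt_pos.2 (by positivity)
    have hsq : s ^ 2 = E * (x ^ 2 / E + x * (x / K) ^ (1 / n')) :=
      Real.sq_sqrt (by positivity)
    have h1 := (hSD s hs).2
    have h2 : s ^ 2 / E = x ^ 2 / E + x * (x / K) ^ (1 / n') := by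
      rw [hsq]; field_simp
    refine ginj (mem_Ioi.2 (hSD s hs).1) (mem_Ioi.2 hx) ?_
    show SD s ^ 2 / E + SD s * (SD s / K) ^ (1 / n') = x ^ 2 / E + x * (x / K) ^ (1 / n')
    rw [h1, h2]
  -- existence of preimages under CMB
  have hex : ∀ σ : ℝ, 0 < σ →
      ∃ N ∈ Ioi (0:ℝ), σf / E * (2 * N) ^ b + εf * (2 * N) ^ c
        = SD σ / E + (SD σ / K) ^ (1 / n') := by
    intro σ hσ
    have h1 : 0 < SD σ := (hSD σ hσ).1
    have h2 : SD σ / E + (SD σ / K) ^ (1 / n') ∈ Ioi (0:ℝ) := by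
      simp only [mem_Ioi]; positivity
    exact CMB_surj hE hσf hεf hb hc h2
  refine ⟨?_, ?_, ?_⟩
  · -- existence
    refine ⟨fun σ => Function.invFunOn (fun N : ℝ => σf / E * (2 * N) ^ b + εf * (2 * N) ^ c)
      (Ioi 0) (SD σ / E + (SD σ / K) ^ (1 / n')), fun σ hσ => ⟨?_, ?_⟩⟩
    · exact Function.invFunOn_mem (hex σ hσ)
    · exact Function.invFunOn_eq (hex σ hσ)
  · -- uniqueness
    intro φ₁ φ₂ h1 h2 σ hσ
    exact CMBinj (mem_Ioi.2 (h1 σ hσ).1) (mem_Ioi.2 (h2 σ hσ).1)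
      (((h1 σ hσ).2).trans ((h2 σ hσ).2).symm)
  · -- properties
    intro φ hφ
    have φpos : ∀ σ : ℝ, 0 < σ → 0 < φ σ := fun σ hσ => (hφ σ hσ).1
    have φeq : ∀ σ : ℝ, 0 < σ →
        σf / E * (2 * φ σ) ^ b + εf * (2 * φ σ) ^ c
          = SD σ / E + (SD σ / K) ^ (1 / n') := fun σ hσ => (hφ σ hσ).2
    have anti : StrictAntiOn φ (Ioi 0) := by
      intro x hx y hy hxy
      have hx' : (0:ℝ) < x := hx
      have hy' : (0:ℝ) < y := hy
      have hROlt := ROmono (mem_Ioi.2 (hSD x hx').1) (mem_Ioi.2 (hSD y hy').1)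
        (SDlt x y hx' hy' hxy)
      by_contra h
      push_neg at h
      have h1 := CMBanti.antitoneOn (mem_Ioi.2 (φpos x hx')) (mem_Ioi.2 (φpos y hy')) h
      rw [φeq x hx', φeq y hy'] at h1
      linarith
    have surj : SurjOn φ (Ioi 0) (Ioi 0) := by
      intro N hN
      have hN' : (0:ℝ) < N := hN
      have hCN : σf / E * (2 * N) ^ b + εf * (2 * N) ^ c ∈ Ioi (0:ℝ) := by
        simp only [mem_Ioi]; positivity
      obtain ⟨x, hx, hxe⟩ := RO_surj hE hK hn hCN
      obtain ⟨σ, hσ, hσe⟩ := SDsurj x hx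
      refine ⟨σ, mem_Ioi.2 hσ, ?_⟩
      refine CMBinj (mem_Ioi.2 (φpos σ hσ)) (mem_Ioi.2 hN') ?_
      show σf / E * (2 * φ σ) ^ b + εf * (2 * φ σ) ^ c
        = σf / E * (2 * N) ^ b + εf * (2 * N) ^ c
      rw [φeq σ hσ, hσe]
      exact hxe
    refine ⟨anti, ⟨fun σ hσ => mem_Ioi.2 (φpos σ hσ), anti.injOn, surj⟩, ?_, ?_⟩
    · -- tendsto atTop
      rw [tendsto_atTop]
      intro M
      obtain ⟨σ₁, hσ₁, hσ₁e⟩ := surj (mem_Ioi.2 (lt_of_lt_of_le one_pos (le_max_right M 1)))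
      have h1 : Iio σ₁ ∈ 𝓝[Ioi 0] (0:ℝ) :=
        mem_nhdsWithin_of_mem_nhds (Iio_mem_nhds hσ₁)
      filter_upwards [h1, self_mem_nhdsWithin] with σ hlt hpos
      have := anti hpos hσ₁ hlt
      rw [hσ₁e] at this
      exact le_trans (le_max_left M 1) this.le
    · -- smoothness
      intro σ₀ hσ₀
      have hσ₀' : (0:ℝ) < σ₀ := hσ₀
      obtain ⟨ha₀, hga₀⟩ := hSD σ₀ hσ₀'
      -- local inverse of g at SD σ₀
      obtain ⟨d₁, hd₁, hder₁⟩ := gf_hasDerivAt hE hK hn ha₀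
      obtain ⟨lg, hlg_cd, hlg_val, hlg_ev⟩ :=
        my_exists_smooth_localInverse (gf_contDiffAt (E := E) hK ha₀) hder₁ hd₁.ne'
      rw [show (SD σ₀) ^ 2 / E + SD σ₀ * (SD σ₀ / K) ^ (1 / n') = σ₀ ^ 2 / E from hga₀]
        at hlg_cd hlg_val hlg_ev
      have hq_cd : ContDiffAt ℝ (⊤ : ℕ∞) (fun s : ℝ => s ^ 2 / E) σ₀ :=
        (contDiffAt_id.pow 2).div_const E
      have hS_cd : ContDiffAt ℝ (⊤ : ℕ∞) (fun s : ℝ => lg (s ^ 2 / E)) σ₀ :=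
        ContDiffAt.comp σ₀ hlg_cd hq_cd
      have hev1 : ∀ᶠ s in 𝓝 σ₀, (fun x : ℝ => x ^ 2 / E + x * (x / K) ^ (1 / n'))
          (lg (s ^ 2 / E)) = s ^ 2 / E := by
        have ht : Tendsto (fun s : ℝ => s ^ 2 / E) (𝓝 σ₀) (𝓝 (σ₀ ^ 2 / E)) :=
          hq_cd.continuousAt
        exact ht.eventually hlg_ev
      have hev2 : ∀ᶠ s in 𝓝 σ₀, 0 < lg (s ^ 2 / E) := by
        have hcont : ContinuousAt (fun s : ℝ => lg (s ^ 2 / E)) σ₀ := hS_cd.continuousAt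
        have h0 : (0:ℝ) < lg (σ₀ ^ 2 / E) := by rw [hlg_val]; exact ha₀
        exact (hcont.eventually_mem (Ioi_mem_nhds h0)).mono fun s hs => hs
      have hSD_eq : ∀ᶠ s in 𝓝[Ioi 0] σ₀, SD s = lg (s ^ 2 / E) := by
        filter_upwards [hev1.filter_mono nhdsWithin_le_nhds,
          hev2.filter_mono nhdsWithin_le_nhds, self_mem_nhdsWithin] with s h1 h2 hs
        have hs' : (0:ℝ) < s := hs
        refine ginj (mem_Ioi.2 (hSD s hs').1) (mem_Ioi.2 h2) ?_
        show SD s ^ 2 / E + SD s * (SD s / K) ^ (1 / n')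
          = lg (s ^ 2 / E) ^ 2 / E + lg (s ^ 2 / E) * (lg (s ^ 2 / E) / K) ^ (1 / n')
        rw [(hSD s hs').2]
        exact h1.symm
      -- local inverse of CMB at φ σ₀
      obtain ⟨d₂, hd₂, hder₂⟩ := CMB_hasDerivAt hE hσf hεf hb hc (φpos σ₀ hσ₀')
      obtain ⟨lC, hlC_cd, hlC_val, hlC_ev⟩ :=
        my_exists_smooth_localInverse (CMB_contDiffAt (σf := σf) (εf := εf) (b := b) (c := c)
          hE (φpos σ₀ hσ₀')) hder₂ hd₂.ne
      rw [show σf / E * (2 * φ σ₀) ^ b + εf * (2 * φ σ₀) ^ c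
          = SD σ₀ / E + (SD σ₀ / K) ^ (1 / n') from φeq σ₀ hσ₀']
        at hlC_cd hlC_val hlC_ev
      -- the composed map
      have hlgv : lg (σ₀ ^ 2 / E) = SD σ₀ := hlg_val
      rw [← hlgv] at hlC_cd hlC_val hlC_ev
      have hr_cd : ContDiffAt ℝ (⊤ : ℕ∞)
          (fun s : ℝ => lg (s ^ 2 / E) / E + (lg (s ^ 2 / E) / K) ^ (1 / n')) σ₀ := by
        have h1 : ContDiffAt ℝ (⊤ : ℕ∞) (fun x : ℝ => x / E + (x / K) ^ (1 / n')) (lg (σ₀ ^ 2 / E)) :=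
          RO_contDiffAt hK (hlgv ▸ ha₀)
        exact ContDiffAt.comp σ₀ h1 hS_cd
      have hΦ_cd : ContDiffAt ℝ (⊤ : ℕ∞)
          (fun s : ℝ => lC (lg (s ^ 2 / E) / E + (lg (s ^ 2 / E) / K) ^ (1 / n'))) σ₀ :=
        ContDiffAt.comp σ₀ hlC_cd hr_cd
      have hev3 : ∀ᶠ s in 𝓝 σ₀, (fun N : ℝ => σf / E * (2 * N) ^ b + εf * (2 * N) ^ c)
          (lC (lg (s ^ 2 / E) / E + (lg (s ^ 2 / E) / K) ^ (1 / n')))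
          = lg (s ^ 2 / E) / E + (lg (s ^ 2 / E) / K) ^ (1 / n') := by
        exact (hr_cd.continuousAt : Tendsto _ _ _).eventually hlC_ev
      have hev4 : ∀ᶠ s in 𝓝 σ₀,
          0 < lC (lg (s ^ 2 / E) / E + (lg (s ^ 2 / E) / K) ^ (1 / n')) := by
        have hcont := hΦ_cd.continuousAt
        have h0 : (0:ℝ) < lC (lg (σ₀ ^ 2 / E) / E + (lg (σ₀ ^ 2 / E) / K) ^ (1 / n')) := by
          rw [hlC_val]; exact φpos σ₀ hσ₀'
        exact (hcont.eventually_mem (Ioi_mem_nhds h0)).mono fun s hs => hs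
      have hφev : φ =ᶠ[𝓝[Ioi 0] σ₀]
          fun s : ℝ => lC (lg (s ^ 2 / E) / E + (lg (s ^ 2 / E) / K) ^ (1 / n')) := by
        filter_upwards [hev3.filter_mono nhdsWithin_le_nhds,
          hev4.filter_mono nhdsWithin_le_nhds, hSD_eq, self_mem_nhdsWithin]
          with s h3 h4 hSDs hs
        have hs' : (0:ℝ) < s := hs
        refine CMBinj (mem_Ioi.2 (φpos s hs')) (mem_Ioi.2 h4) ?_
        show σf / E * (2 * φ s) ^ b + εf * (2 * φ s) ^ c
          = σf / E * (2 * lC (lg (s ^ 2 / E) / E + (lg (s ^ 2 / E) / K) ^ (1 / n'))) ^ b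
            + εf * (2 * lC (lg (s ^ 2 / E) / E + (lg (s ^ 2 / E) / K) ^ (1 / n'))) ^ c
        rw [φeq s hs', hSDs]
        exact h3.symm
      refine (hΦ_cd.contDiffWithinAt).congr_of_eventuallyEq hφev ?_
      exact hlC_val.symm
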